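/- Let S² be the unit sphere centered at the origin o in E³, let p ∈ S², and let H be the tangent plane of S² at p. Let T = conv{p_1, p_2, p_3} be a nondegenerate triangle contained in H with p_1 = p, and for i = 1, 2, 3 let φ_i be the (Euclidean) angle of T at p_i. Let p'_i = p_i/‖p_i‖ be the central projection of p_i onto S² from o, let φ'_i be the spherical angle of the spherical triangle p'_1 p'_2 p'_3 at p'_i (the angle at o between the components of p'_j and p'_k orthogonal to p'_i, for {i,j,k} = {1,2,3}), and let d'_i = arccos⟨p'_j, p'_k⟩ be the spherical length of the side opposite p'_i. Then tan φ_2 = tan φ'_2 · cos d'_3 and tan φ_3 = tan φ'_3 · cos d'_2. -/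

import Mathlib

/-!
Write `q = p₂`. Components orthogonal to `q / ‖q‖` are unchanged by subtracting multiples of `q`,
and scaling a vertex scales its component, so the spherical angle `φ'₂` is the angle between the
components orthogonal to `q` of the edge vectors `p - q` and `p₃ - q` of `T`. These edges lie in
`pᗮ`, and projecting them onto `qᗮ` divides their inner product and their Gram determinant by
`‖q‖²`, whence `tan φ'₂ = ‖q‖ tan φ₂`. Finally `cos d'₃ = ⟪p, q / ‖q‖⟫ = 1 / ‖q‖`.
-/

open MeasureTheory Metric

/-- Central projection of a point of `E³` onto the unit sphere `S²` from the origin. -/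
noncomputable def sphProj (x : EuclideanSpace ℝ (Fin 3)) : EuclideanSpace ℝ (Fin 3) :=
  ‖x‖⁻¹ • x

/-- The spherical angle at `v` of the spherical triangle with vertices `u, v, w` on `S²`:
the angle between the components of `u` and `w` orthogonal to `v`. -/
noncomputable def sphericalAngle (u v w : EuclideanSpace ℝ (Fin 3)) : ℝ :=
  InnerProductGeometry.angle (u - (inner ℝ u v : ℝ) • v) (w - (inner ℝ w v : ℝ) • v)

/-- The spherical distance between two points `u, w` of the unit sphere `S²`. -/
noncomputable def sphericalDist (u w : EuclideanSpace ℝ (Fin 3)) : ℝ :=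
  Real.arccos (inner ℝ u w : ℝ)

open InnerProductGeometry RealInnerProductSpace

section InnerProductSpace

variable {V : Type*} [NormedAddCommGroup V] [InnerProductSpace ℝ V]

theorem tan_angle_eq_sqrt_div_inner (x y : V) :
    Real.tan (angle x y) = √(⟪x, x⟫ * ⟪y, y⟫ - ⟪x, y⟫ * ⟪x, y⟫) / ⟪x, y⟫ := by
  rw [Real.tan_eq_sin_div_cos, cos_angle, div_div_eq_mul_div, sin_angle_mul_norm_mul_norm]

theorem tan_angle_eq_mul_tan_angle {a b x y : V} {k : ℝ} (hk : 0 < k)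
    (hinner : ⟪a, b⟫ * k ^ 2 = ⟪x, y⟫)
    (hgram : (⟪a, a⟫ * ⟪b, b⟫ - ⟪a, b⟫ * ⟪a, b⟫) * k ^ 2 =
      ⟪x, x⟫ * ⟪y, y⟫ - ⟪x, y⟫ * ⟪x, y⟫) :
    Real.tan (angle a b) = k * Real.tan (angle x y) := by
  rw [tan_angle_eq_sqrt_div_inner, tan_angle_eq_sqrt_div_inner, ← hgram, ← hinner,
    Real.sqrt_mul' _ (sq_nonneg k), Real.sqrt_sq hk.le]
  rcases eq_or_ne ⟪a, b⟫ 0 with h | h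
  · simp [h]
  · field_simp

theorem inner_sub_inner_smul_sub_inner_smul {v : V} (hv : ‖v‖ = 1) (z w : V) :
    ⟪z - ⟪z, v⟫ • v, w - ⟪w, v⟫ • v⟫ = ⟪z, w⟫ - ⟪z, v⟫ * ⟪w, v⟫ := by
  have hvv : ⟪v, v⟫ = 1 := by rw [real_inner_self_eq_norm_sq, hv, one_pow]
  simp only [inner_sub_left, inner_sub_right, real_inner_smul_left, real_inner_smul_right, hvv,
    real_inner_comm v]
  ring

/-- For `q = p - a` in the tangent plane at `p`, the orthogonal projection of `pᗮ` onto `qᗮ`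
divides the inner product and the Gram determinant of `a` and any `b ∈ pᗮ` by `‖q‖²`. -/
theorem tan_angle_sub_inner_smul_eq_norm_mul_tan_angle {p a b : V} (hp : ‖p‖ = 1)
    (ha : ⟪a, p⟫ = 0) (hb : ⟪b, p⟫ = 0) {v : V} (hv : v = ‖p - a‖⁻¹ • (p - a)) :
    Real.tan (angle (a - ⟪a, v⟫ • v) (b - ⟪b, v⟫ • v)) = ‖p - a‖ * Real.tan (angle a b) := by
  set k := ‖p - a‖
  have hk2 : k ^ 2 = 1 + ⟪a, a⟫ := by
    rw [norm_sub_sq_real, hp, real_inner_comm, ha, real_inner_self_eq_norm_sq]; ring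
  have hk : 0 < k := by nlinarith [real_inner_self_nonneg (x := a), norm_nonneg (p - a)]
  have hv1 : ‖v‖ = 1 := by rw [hv, norm_smul, norm_inv, norm_norm, inv_mul_cancel₀ hk.ne']
  have hav : ⟪a, v⟫ = -⟪a, a⟫ / k := by
    rw [hv, real_inner_smul_right, inner_sub_right, ha]; ring
  have hbv : ⟪b, v⟫ = -⟪a, b⟫ / k := by
    rw [hv, real_inner_smul_right, inner_sub_right, hb, real_inner_comm a b]; ring
  refine tan_angle_eq_mul_tan_angle hk ?_ ?_ <;>
    simp only [inner_sub_inner_smul_sub_inner_smul hv1] <;> rw [hav, hbv] <;> field_simp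
  · linear_combination ⟪a, b⟫ * hk2
  · linear_combination (⟪a, a⟫ * ⟪b, b⟫ - ⟪a, b⟫ * ⟪a, b⟫) * k ^ 2 * hk2

end InnerProductSpace

section Sphere

local notation "E³" => EuclideanSpace ℝ (Fin 3)

theorem sphProj_of_norm_eq_one {p : E³} (hp : ‖p‖ = 1) : sphProj p = p := by
  rw [sphProj, hp, inv_one, one_smul]

theorem norm_smul_sphProj (q : E³) : ‖q‖ • sphProj q = q := by
  rcases eq_or_ne q 0 with rfl | hq
  · simp
  · rw [sphProj, smul_smul, mul_inv_cancel₀ (norm_ne_zero_iff.2 hq), one_smul]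

theorem norm_sphProj {q : E³} (hq : q ≠ 0) : ‖sphProj q‖ = 1 := by
  rw [sphProj, norm_smul, norm_inv, norm_norm, inv_mul_cancel₀ (norm_ne_zero_iff.2 hq)]

theorem sphericalAngle_smul_right (u v w : E³) {β : ℝ} (hβ : 0 < β) :
    sphericalAngle u v (β • w) = sphericalAngle u v w := by
  rw [sphericalAngle, sphericalAngle, real_inner_smul_left, mul_smul, ← smul_sub,
    angle_smul_right_of_pos _ _ hβ]

theorem sphericalAngle_sub_smul {v : E³} (hv : ‖v‖ = 1) (u w : E³) (α β : ℝ) :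
    sphericalAngle (u - α • v) v (w - β • v) = sphericalAngle u v w := by
  have hvv : ⟪v, v⟫ = 1 := by rw [real_inner_self_eq_norm_sq, hv, one_pow]
  have hcomp (z : E³) (γ : ℝ) : z - γ • v - ⟪z - γ • v, v⟫ • v = z - ⟪z, v⟫ • v := by
    rw [inner_sub_left, real_inner_smul_left, hvv, mul_one, sub_smul]
    abel
  rw [sphericalAngle, sphericalAngle, hcomp, hcomp]

theorem cos_sphericalDist_sphProj {p q : E³} (hp : ‖p‖ = 1) (hq : ⟪q - p, p⟫ = 0) :
    Real.cos (sphericalDist p (sphProj q)) = ‖q‖⁻¹ := by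
  have hpq : ⟪p, q⟫ = 1 := by
    rw [inner_sub_left, real_inner_self_eq_norm_sq, hp, sub_eq_zero] at hq
    rw [real_inner_comm, hq, one_pow]
  have hq1 : 1 ≤ ‖q‖ := by
    simpa [hpq, hp] using real_inner_le_norm p q
  rw [sphericalDist, sphProj, real_inner_smul_right, hpq, mul_one,
    Real.cos_arccos (le_trans (by norm_num) (inv_nonneg.2 (norm_nonneg q)))
      (inv_le_one_of_one_le₀ hq1)]

theorem tan_angle_eq_tan_sphericalAngle_mul_cos_sphericalDist {p q q' : E³} (hp : ‖p‖ = 1)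
    (hq : ⟪q - p, p⟫ = 0) (hq' : ⟪q' - p, p⟫ = 0) :
    Real.tan (angle (p - q) (q' - q)) =
      Real.tan (sphericalAngle (sphProj p) (sphProj q) (sphProj q')) *
        Real.cos (sphericalDist (sphProj p) (sphProj q)) := by
  have hne {z : E³} (hz : ⟪z - p, p⟫ = 0) : z ≠ 0 := by
    rintro rfl
    simp [hp] at hz
  have hangle : sphericalAngle (sphProj p) (sphProj q) (sphProj q') =
      sphericalAngle (p - q) (sphProj q) (q' - q) := by
    rw [sphProj_of_norm_eq_one hp, show sphProj q' = ‖q'‖⁻¹ • q' from rfl,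
      sphericalAngle_smul_right _ _ _ (inv_pos.2 (norm_pos_iff.2 (hne hq'))),
      ← sphericalAngle_sub_smul (norm_sphProj (hne hq)) p q' ‖q‖ ‖q‖, norm_smul_sphProj]
  have hpq : ⟪p - q, p⟫ = 0 := by rw [← neg_sub, inner_neg_left, hq, neg_zero]
  have hq'q : ⟪q' - q, p⟫ = 0 := by
    rw [← sub_sub_sub_cancel_right q' q p, inner_sub_left, hq, hq', sub_zero]
  have htan := tan_angle_sub_inner_smul_eq_norm_mul_tan_angle hp hpq hq'q (v := sphProj q)
    (by rw [sub_sub_cancel]; rfl)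
  have hcos : Real.cos (sphericalDist (sphProj p) (sphProj q)) = ‖q‖⁻¹ := by
    rw [sphProj_of_norm_eq_one hp, cos_sphericalDist_sphProj hp hq]
  rw [hcos, hangle, sphericalAngle, htan, sub_sub_cancel,
    mul_right_comm, mul_inv_cancel₀ (norm_ne_zero_iff.2 (hne hq)), one_mul]

end Sphere

theorem tangent_triangle_spherical_angles_general (p p₁ p₂ p₃ : EuclideanSpace ℝ (Fin 3))
    (hp : ‖p‖ = 1) (hp₁ : p₁ = p)
    (hp₂ : (inner ℝ (p₂ - p) p : ℝ) = 0) (hp₃ : (inner ℝ (p₃ - p) p : ℝ) = 0) :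
    Real.tan (InnerProductGeometry.angle (p₁ - p₂) (p₃ - p₂)) =
      Real.tan (sphericalAngle (sphProj p₁) (sphProj p₂) (sphProj p₃)) *
        Real.cos (sphericalDist (sphProj p₁) (sphProj p₂)) ∧
    Real.tan (InnerProductGeometry.angle (p₁ - p₃) (p₂ - p₃)) =
      Real.tan (sphericalAngle (sphProj p₁) (sphProj p₃) (sphProj p₂)) *
        Real.cos (sphericalDist (sphProj p₁) (sphProj p₃)) := by
  subst hp₁
  exact ⟨tan_angle_eq_tan_sphericalAngle_mul_cos_sphericalDist hp hp₂ hp₃,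
    tan_angle_eq_tan_sphericalAngle_mul_cos_sphericalDist hp hp₃ hp₂⟩

/-- Spherical trigonometry lemma: let `T = conv{p₁, p₂, p₃}` be a nondegenerate triangle in the
tangent plane of `S²` at `p₁ = p ∈ S²`, with Euclidean angles `φᵢ` at `pᵢ`; let `p'ᵢ` be the
central projections onto `S²`, `φ'ᵢ` the spherical angles of the spherical triangle
`p'₁p'₂p'₃`, and `d'ᵢ` the spherical side lengths opposite `p'ᵢ`.
Then `tan φ₂ = tan φ'₂ · cos d'₃` and `tan φ₃ = tan φ'₃ · cos d'₂`. -/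
theorem tangent_triangle_spherical_angles (p p₁ p₂ p₃ : EuclideanSpace ℝ (Fin 3))
    (hp : ‖p‖ = 1) (hp₁ : p₁ = p)
    (hp₂ : (inner ℝ (p₂ - p) p : ℝ) = 0) (hp₃ : (inner ℝ (p₃ - p) p : ℝ) = 0)
    (hnd : ¬ Collinear ℝ ({p₁, p₂, p₃} : Set (EuclideanSpace ℝ (Fin 3)))) :
    Real.tan (InnerProductGeometry.angle (p₁ - p₂) (p₃ - p₂)) =
      Real.tan (sphericalAngle (sphProj p₁) (sphProj p₂) (sphProj p₃)) *
        Real.cos (sphericalDist (sphProj p₁) (sphProj p₂)) ∧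
    Real.tan (InnerProductGeometry.angle (p₁ - p₃) (p₂ - p₃)) =
      Real.tan (sphericalAngle (sphProj p₁) (sphProj p₃) (sphProj p₂)) *
        Real.cos (sphericalDist (sphProj p₁) (sphProj p₃)) :=
  tangent_triangle_spherical_angles_general p p₁ p₂ p₃ hp hp₁ hp₂ hp₃
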